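/- arXiv:2401.01859 — 2 statements merged into one kernel-verified Lean document; each statement's English description precedes it below -/
import Mathlib

section
/- Let G be a group and let Γ be a subgroup of G acting on G by left translations. Let V be a finite-dimensional complex inner product space and ω : Γ → GL(V) a group homomorphism. Let u, u' : G → ℝ be functions with 0 ≤ u(x), u'(x) ≤ 1 for all x, such that for every x ∈ G the sets {γ ∈ Γ : u(γx) ≠ 0} and {γ ∈ Γ : u'(γx) ≠ 0} are finite and ∑_{γ∈Γ} u(γx) = ∑_{γ∈Γ} u'(γx) = 1. Assume there exist γ₁,…,γₙ ∈ Γ and c₁,…,cₙ > 0 with u'(x) ≤ ∑_{j=1}^n c_j u(γ_j x) for all x ∈ G, and δ₁,…,δ_m ∈ Γ and d₁,…,d_m > 0 with u(x) ≤ ∑_{i=1}^m d_i u'(δ_i x) for all x ∈ G. Then there exists a constant C > 0 such that for all x ∈ G and all v ∈ V one has (1/C)·‖v‖²_{u,x} ≤ ‖v‖²_{u',x} ≤ C·‖v‖²_{u,x}. -/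
/-!
If `u' ≤ ∑ⱼ cⱼ · u(γⱼ ·)`, then for the twisted norms one bounds each term
`u'(γx) ‖ω(γ)v‖²` by `∑ⱼ cⱼ ‖ω(γⱼ)⁻¹‖² u(γⱼγx) ‖ω(γⱼγ)v‖²`, using
`ω(γ) = ω(γⱼ)⁻¹ ω(γⱼγ)`; summing over `γ ∈ Γ` and reindexing `γ ↦ γⱼγ` gives
`‖v‖²_{u',x} ≤ K ‖v‖²_{u,x}` with `K = ∑ⱼ cⱼ ‖ω(γⱼ)⁻¹‖²` independent of `x` and `v`.
The symmetric hypothesis gives the reverse bound.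
-/

open Function

theorem finsum_le_sum_mul_finsum_of_le_sum_translates {Γ ι : Type*} [Group Γ] [Fintype ι]
    {f g : Γ → ℝ} (hg0 : ∀ γ, 0 ≤ g γ) (hg : g.HasFiniteSupport) (γs : ι → Γ) {c : ι → ℝ}
    (hc : ∀ j, 0 ≤ c j) (hfg : ∀ γ, f γ ≤ ∑ j, c j * g (γs j * γ)) :
    ∑ᶠ γ, f γ ≤ (∑ j, c j) * ∑ᶠ γ, g γ := by
  by_cases hf : f.HasFiniteSupport
  · have hgs : ∀ j, (fun γ => c j * g (γs j * γ)).HasFiniteSupport := fun j =>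
      (hg.fun_comp_of_injective (mul_right_injective (γs j))).mul_right (fun _ => c j)
    have htranslate (a : Γ) : ∑ᶠ γ, g (a * γ) = ∑ᶠ γ, g γ :=
      finsum_comp_equiv (Equiv.mulLeft a)
    calc ∑ᶠ γ, f γ ≤ ∑ᶠ γ, ∑ j, c j * g (γs j * γ) :=
          finsum_le_finsum' hf (HasFiniteSupport.sum hgs _) hfg
      _ = ∑ j, c j * ∑ᶠ γ, g (γs j * γ) := by
        simp only [finsum_sum_comm _ _ fun j _ => hgs j, mul_finsum]
      _ = (∑ j, c j) * ∑ᶠ γ, g γ := by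
        simp only [htranslate, Finset.sum_mul]
  · rw [finsum_of_infinite_support hf]
    exact mul_nonneg (Finset.sum_nonneg fun j _ => hc j) (finsum_nonneg hg0)

section TwistedNorm

variable {𝕜 V : Type*} [NontriviallyNormedField 𝕜] [NormedAddCommGroup V] [NormedSpace 𝕜 V]

theorem norm_le_opNorm_inv_mul_norm_apply [CompleteSpace 𝕜] [FiniteDimensional 𝕜 V]
    (A : (V →ₗ[𝕜] V)ˣ) (x : V) :
    ‖x‖ ≤ ‖LinearMap.toContinuousLinearMap (↑A⁻¹ : V →ₗ[𝕜] V)‖ * ‖(A : V →ₗ[𝕜] V) x‖ := by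
  calc ‖x‖ = ‖LinearMap.toContinuousLinearMap (↑A⁻¹ : V →ₗ[𝕜] V) ((A : V →ₗ[𝕜] V) x)‖ := by
        rw [LinearMap.coe_toContinuousLinearMap', ← Module.End.mul_apply, Units.inv_mul,
          Module.End.one_apply]
    _ ≤ _ := ContinuousLinearMap.le_opNorm _ _

variable {G : Type*} [Group G] {Γ : Subgroup G}

noncomputable def twistedNormSq (ω : Γ →* (V →ₗ[𝕜] V)ˣ) (u : G → ℝ) (x : G) (v : V) : ℝ :=
  ∑ᶠ γ : Γ, u ((γ : G) * x) * ‖(ω γ : V →ₗ[𝕜] V) v‖ ^ 2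

theorem twistedNormSq_nonneg (ω : Γ →* (V →ₗ[𝕜] V)ˣ) {u : G → ℝ} (hu : ∀ x, 0 ≤ u x)
    (x : G) (v : V) : 0 ≤ twistedNormSq ω u x v :=
  finsum_nonneg fun _ => mul_nonneg (hu _) (sq_nonneg _)

theorem norm_apply_le_opNorm_inv_mul_norm_apply_mul [CompleteSpace 𝕜] [FiniteDimensional 𝕜 V]
    (ω : Γ →* (V →ₗ[𝕜] V)ˣ) (δ γ : Γ) (v : V) :
    ‖(ω γ : V →ₗ[𝕜] V) v‖ ≤
      ‖LinearMap.toContinuousLinearMap (↑(ω δ)⁻¹ : V →ₗ[𝕜] V)‖ *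
        ‖(ω (δ * γ) : V →ₗ[𝕜] V) v‖ := by
  rw [map_mul, Units.val_mul, Module.End.mul_apply]
  exact norm_le_opNorm_inv_mul_norm_apply _ _

theorem twistedNormSq_le_of_le_sum_translates [CompleteSpace 𝕜] [FiniteDimensional 𝕜 V]
    {ι : Type*} [Fintype ι] (ω : Γ →* (V →ₗ[𝕜] V)ˣ) {u u' : G → ℝ} (hu : ∀ x, 0 ≤ u x)
    (hufin : ∀ x, {γ : Γ | u ((γ : G) * x) ≠ 0}.Finite) (γs : ι → Γ) {c : ι → ℝ}
    (hc : ∀ j, 0 ≤ c j) (hle : ∀ x, u' x ≤ ∑ j, c j * u ((γs j : G) * x)) (x : G) (v : V) :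
    twistedNormSq ω u' x v ≤
      (∑ j, c j * ‖LinearMap.toContinuousLinearMap (↑(ω (γs j))⁻¹ : V →ₗ[𝕜] V)‖ ^ 2) *
        twistedNormSq ω u x v := by
  set M : ι → ℝ := fun j => ‖LinearMap.toContinuousLinearMap (↑(ω (γs j))⁻¹ : V →ₗ[𝕜] V)‖
  set g : Γ → ℝ := fun γ => u ((γ : G) * x) * ‖(ω γ : V →ₗ[𝕜] V) v‖ ^ 2
  have hg : g.HasFiniteSupport :=
    (hufin x).subset fun γ hγ hu0 => hγ (by simp only [g, hu0, zero_mul])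
  refine finsum_le_sum_mul_finsum_of_le_sum_translates (fun γ => mul_nonneg (hu _) (sq_nonneg _))
    hg γs (fun j => mul_nonneg (hc j) (sq_nonneg _)) fun γ => ?_
  have hnorm (j : ι) : ‖(ω γ : V →ₗ[𝕜] V) v‖ ^ 2 ≤ M j ^ 2 * ‖(ω (γs j * γ) : V →ₗ[𝕜] V) v‖ ^ 2 := by
    rw [← mul_pow]
    exact pow_le_pow_left₀ (norm_nonneg _)
      (norm_apply_le_opNorm_inv_mul_norm_apply_mul ω (γs j) γ v) 2
  calc u' ((γ : G) * x) * ‖(ω γ : V →ₗ[𝕜] V) v‖ ^ 2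
      ≤ (∑ j, c j * u (((γs j * γ : Γ) : G) * x)) * ‖(ω γ : V →ₗ[𝕜] V) v‖ ^ 2 := by
        gcongr
        simpa only [Subgroup.coe_mul, mul_assoc] using hle ((γ : G) * x)
    _ = ∑ j, c j * u (((γs j * γ : Γ) : G) * x) * ‖(ω γ : V →ₗ[𝕜] V) v‖ ^ 2 := Finset.sum_mul ..
    _ ≤ ∑ j, c j * M j ^ 2 * g (γs j * γ) := Finset.sum_le_sum fun j _ => by
        calc _ ≤ c j * u (((γs j * γ : Γ) : G) * x) *
              (M j ^ 2 * ‖(ω (γs j * γ) : V →ₗ[𝕜] V) v‖ ^ 2) :=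
            mul_le_mul_of_nonneg_left (hnorm j) (mul_nonneg (hc j) (hu _))
          _ = c j * M j ^ 2 * g (γs j * γ) := by ring

end TwistedNorm

theorem metrics_equivalent_general
    {G : Type*} [Group G] (Γ : Subgroup G)
    {V : Type*} [NormedAddCommGroup V] [InnerProductSpace ℂ V] [FiniteDimensional ℂ V]
    (ω : Γ →* (V →ₗ[ℂ] V)ˣ)
    (u u' : G → ℝ)
    (hu01 : ∀ x : G, 0 ≤ u x ∧ u x ≤ 1)
    (hu'01 : ∀ x : G, 0 ≤ u' x ∧ u' x ≤ 1)
    (hufin : ∀ x : G, {γ : Γ | u ((γ : G) * x) ≠ 0}.Finite)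
    (hu'fin : ∀ x : G, {γ : Γ | u' ((γ : G) * x) ≠ 0}.Finite)
    (hdom : ∃ (n : ℕ) (γs : Fin n → Γ) (c : Fin n → ℝ), (∀ j, 0 < c j) ∧
      ∀ x : G, u' x ≤ ∑ j, c j * u ((γs j : G) * x))
    (hdom' : ∃ (m : ℕ) (δs : Fin m → Γ) (d : Fin m → ℝ), (∀ i, 0 < d i) ∧
      ∀ x : G, u x ≤ ∑ i, d i * u' ((δs i : G) * x)) :
    ∃ C > (0 : ℝ), ∀ (x : G) (v : V),
      (1 / C) * (∑ᶠ γ : Γ, u ((γ : G) * x) * ‖(ω γ : V →ₗ[ℂ] V) v‖ ^ 2) ≤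
          ∑ᶠ γ : Γ, u' ((γ : G) * x) * ‖(ω γ : V →ₗ[ℂ] V) v‖ ^ 2 ∧
        (∑ᶠ γ : Γ, u' ((γ : G) * x) * ‖(ω γ : V →ₗ[ℂ] V) v‖ ^ 2) ≤
          C * ∑ᶠ γ : Γ, u ((γ : G) * x) * ‖(ω γ : V →ₗ[ℂ] V) v‖ ^ 2 := by
  obtain ⟨n, γs, c, hc, hle⟩ := hdom
  obtain ⟨m, δs, d, hd, hle'⟩ := hdom'
  have hu0 x := (hu01 x).1
  have hu'0 x := (hu'01 x).1
  have hbound := twistedNormSq_le_of_le_sum_translates ω hu0 hufin γs (fun j => (hc j).le) hle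
  have hbound' := twistedNormSq_le_of_le_sum_translates ω hu'0 hu'fin δs (fun i => (hd i).le) hle'
  set K := ∑ j, c j * ‖LinearMap.toContinuousLinearMap (↑(ω (γs j))⁻¹ : V →ₗ[ℂ] V)‖ ^ 2
  set K' := ∑ i, d i * ‖LinearMap.toContinuousLinearMap (↑(ω (δs i))⁻¹ : V →ₗ[ℂ] V)‖ ^ 2
  have hC : 0 < max (max K K') 1 := by positivity
  refine ⟨max (max K K') 1, hC, fun x v => ⟨?_, ?_⟩⟩
  · rw [one_div_mul_eq_div, div_le_iff₀ hC]
    calc twistedNormSq ω u x v ≤ K' * twistedNormSq ω u' x v := hbound' x v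
      _ ≤ twistedNormSq ω u' x v * max (max K K') 1 := by
        rw [mul_comm]
        gcongr
        · exact twistedNormSq_nonneg ω hu'0 x v
        · exact le_max_of_le_left (le_max_right _ _)
  · calc twistedNormSq ω u' x v ≤ K * twistedNormSq ω u x v := hbound x v
      _ ≤ max (max K K') 1 * twistedNormSq ω u x v := by
        gcongr
        · exact twistedNormSq_nonneg ω hu0 x v
        · exact le_max_of_le_left (le_max_left _ _)

/-- Equivalence of the twisted hermitean metrics attached to two
partition functions `u`, `u'` on `G` for the flat bundle `E_ω`. -/
theorem metrics_equivalent
    {G : Type*} [Group G] (Γ : Subgroup G)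
    {V : Type*} [NormedAddCommGroup V] [InnerProductSpace ℂ V] [FiniteDimensional ℂ V]
    (ω : Γ →* (V →ₗ[ℂ] V)ˣ)
    (u u' : G → ℝ)
    (hu01 : ∀ x : G, 0 ≤ u x ∧ u x ≤ 1)
    (hu'01 : ∀ x : G, 0 ≤ u' x ∧ u' x ≤ 1)
    (hufin : ∀ x : G, {γ : Γ | u ((γ : G) * x) ≠ 0}.Finite)
    (hu'fin : ∀ x : G, {γ : Γ | u' ((γ : G) * x) ≠ 0}.Finite)
    (husum : ∀ x : G, ∑ᶠ γ : Γ, u ((γ : G) * x) = 1)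
    (hu'sum : ∀ x : G, ∑ᶠ γ : Γ, u' ((γ : G) * x) = 1)
    (hdom : ∃ (n : ℕ) (γs : Fin n → Γ) (c : Fin n → ℝ), (∀ j, 0 < c j) ∧
      ∀ x : G, u' x ≤ ∑ j, c j * u ((γs j : G) * x))
    (hdom' : ∃ (m : ℕ) (δs : Fin m → Γ) (d : Fin m → ℝ), (∀ i, 0 < d i) ∧
      ∀ x : G, u x ≤ ∑ i, d i * u' ((δs i : G) * x)) :
    ∃ C > (0 : ℝ), ∀ (x : G) (v : V),
      (1 / C) * (∑ᶠ γ : Γ, u ((γ : G) * x) * ‖(ω γ : V →ₗ[ℂ] V) v‖ ^ 2) ≤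
          ∑ᶠ γ : Γ, u' ((γ : G) * x) * ‖(ω γ : V →ₗ[ℂ] V) v‖ ^ 2 ∧
        (∑ᶠ γ : Γ, u' ((γ : G) * x) * ‖(ω γ : V →ₗ[ℂ] V) v‖ ^ 2) ≤
          C * ∑ᶠ γ : Γ, u ((γ : G) * x) * ‖(ω γ : V →ₗ[ℂ] V) v‖ ^ 2 :=
  metrics_equivalent_general Γ ω u u' hu01 hu'01 hufin hu'fin hdom hdom'
end

section
/- Let G be a locally compact, Hausdorff, totally disconnected topological group, H a complex Hilbert space, and ρ a continuous representation of G on H. Assume that ρ is a compact representation in the sense that for every compact open subgroup K of G, with μ_K the Haar probability measure on K, the operator P_K : H → H given by the Bochner integral P_K v = ∫_K ρ(k) v dμ_K(k) is a compact operator. Then for every pair of closed ρ-invariant subspaces A ⊊ B of H there exist closed ρ-invariant subspaces C, D with A ⊆ C ⊊ D ⊆ B such that there is no closed ρ-invariant subspace E with C ⊊ E ⊊ D. In particular, if H ≠ 0, the representation ρ has an irreducible subquotient. -/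
/-!
Pick `v ∈ B \ A`. By van Dantzig there is a compact open subgroup `K` moving `v` by less than
half its distance to `A`. Averaging over `K` gives a compact, hence finite-rank, projection `P`
onto the `K`-fixed vectors; it preserves every closed invariant subspace and sends `v` to some
`w ∈ B \ A`. Let `D` be the smallest closed invariant subspace of `[A, B]` containing `w`, and
`C` a maximal closed invariant subspace of `[A, D]` avoiding `w`. Zorn's lemma applies because
`P` maps the union of a chain avoiding `w` into a finite-dimensional subspace of one of its
members, so `w = P w` is not in the closure of the union.
-/

open MeasureTheory

/-- A closed subspace invariant under a representation by invertible bounded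
operators. -/
def IsClosedInvariantSubspace {G H : Type*} [Group G]
    [NormedAddCommGroup H] [InnerProductSpace ℂ H]
    (ρ : G →* (H →L[ℂ] H)ˣ) (U : Submodule ℂ H) : Prop :=
  IsClosed (U : Set H) ∧ ∀ g : G, ∀ v ∈ U, (ρ g : H →L[ℂ] H) v ∈ U

open Set Pointwise Topology in
theorem exists_compact_open_subgroup_subset {G : Type*} [Group G] [TopologicalSpace G]
    [IsTopologicalGroup G] [LocallyCompactSpace G] [T2Space G] [TotallyDisconnectedSpace G]
    {U : Set G} (hU : U ∈ 𝓝 1) :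
    ∃ K : Subgroup G, IsCompact (K : Set G) ∧ IsOpen (K : Set G) ∧ (K : Set G) ⊆ U := by
  obtain ⟨s, hs, hsU, hsc⟩ := local_compact_nhds hU
  obtain ⟨W, hW, h1W, hWs⟩ := loc_compact_Haus_tot_disc_of_zero_dim.mem_nhds_iff.mp hs
  have hWc : IsCompact W := hsc.of_isClosed_subset hW.isClosed hWs
  obtain ⟨V, hV, hVW⟩ := compact_open_separated_mul_left hWc hW.isOpen subset_rfl
  let K := MulAction.stabilizer G W
  have hVK : V ∩ V⁻¹ ⊆ K := fun g ⟨hg, hg'⟩ => MulAction.mem_stabilizer_iff.mpr <|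
    ((smul_set_subset_mul hg).trans hVW).antisymm <|
      subset_smul_set_iff.mpr ((smul_set_subset_mul (mem_inv.mp hg')).trans hVW)
  have hKW : (K : Set G) ⊆ W := fun g hg => by
    rw [← MulAction.mem_stabilizer_iff.mp hg]
    exact ⟨1, h1W, mul_one g⟩
  have hKo : IsOpen (K : Set G) :=
    K.isOpen_of_mem_nhds <| Filter.mem_of_superset (Filter.inter_mem hV (inv_mem_nhds_one G hV)) hVK
  exact ⟨K, hWc.of_isClosed_subset (K.isClosed_of_isOpen hKo) hKW, hKo,
    hKW.trans (hWs.trans hsU)⟩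

section OrbitAverage

variable {K E : Type*} [Group K] [TopologicalSpace K] [CompactSpace K] [MeasurableSpace K]
  [BorelSpace K] [NormedAddCommGroup E] [NormedSpace ℂ E]
  (μ : Measure K) (π : K →* (E →L[ℂ] E))

theorem integrable_orbit [IsFiniteMeasure μ] (hπ : ∀ u, Continuous fun k => π k u) (u : E) :
    Integrable (fun k => π k u) μ :=
  (hπ u).integrable_of_hasCompactSupport (HasCompactSupport.of_compactSpace _)

noncomputable def orbitAverage [IsFiniteMeasure μ] (hπ : ∀ u, Continuous fun k => π k u) :
    E →ₗ[ℂ] E where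
  toFun u := ∫ k, π k u ∂μ
  map_add' u v := by
    simp only [map_add]
    exact integral_add (integrable_orbit μ π hπ u) (integrable_orbit μ π hπ v)
  map_smul' c u := by
    simp only [map_smul, RingHom.id_apply]
    exact integral_smul c _

variable {μ π} {hπ : ∀ u, Continuous fun k => π k u}

theorem orbitAverage_apply [IsFiniteMeasure μ] (u : E) :
    orbitAverage μ π hπ u = ∫ k, π k u ∂μ := rfl

theorem orbitAverage_mem [CompleteSpace E] [IsProbabilityMeasure μ] {U : Submodule ℂ E}
    (hU : IsClosed (U : Set E)) (hπU : ∀ k, ∀ u ∈ U, π k u ∈ U) {u : E} (hu : u ∈ U) :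
    orbitAverage μ π hπ u ∈ U :=
  (U.restrictScalars ℝ).convex.integral_mem hU (.of_forall fun k => hπU k u hu)
    (integrable_orbit μ π hπ u)

theorem orbitAverage_eq_self [CompleteSpace E] [IsProbabilityMeasure μ] {u : E}
    (hu : ∀ k, π k u = u) : orbitAverage μ π hπ u = u := by
  simp [orbitAverage_apply, hu]

theorem apply_orbitAverage [IsTopologicalGroup K] [CompleteSpace E] [IsFiniteMeasure μ]
    [μ.IsMulLeftInvariant] (k : K) (u : E) :
    π k (orbitAverage μ π hπ u) = orbitAverage μ π hπ u := by
  rw [orbitAverage_apply, ← (π k).integral_comp_comm (integrable_orbit μ π hπ u)]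
  simp_rw [← mul_apply_eq_comp, ← map_mul]
  exact integral_mul_left_eq_self (fun k' => π k' u) k

theorem isIdempotentElem_orbitAverage [IsTopologicalGroup K] [CompleteSpace E]
    [IsProbabilityMeasure μ] [μ.IsMulLeftInvariant] : IsIdempotentElem (orbitAverage μ π hπ) :=
  LinearMap.ext fun u => orbitAverage_eq_self (hπ := hπ) (apply_orbitAverage · u)

theorem norm_orbitAverage_sub_le [CompleteSpace E] [IsProbabilityMeasure μ] {u : E} {δ : ℝ}
    (hδ : ∀ k, ‖π k u - u‖ ≤ δ) : ‖orbitAverage μ π hπ u - u‖ ≤ δ := by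
  have h := norm_integral_le_of_norm_le_const (μ := μ) (.of_forall hδ)
  rwa [integral_sub (integrable_orbit μ π hπ u) (integrable_const u), integral_const,
    probReal_univ, one_smul, mul_one] at h

end OrbitAverage

theorem IsCompactOperator.finiteDimensional_range_of_isIdempotentElem {𝕜 E : Type*}
    [NontriviallyNormedField 𝕜] [CompleteSpace 𝕜] [NormedAddCommGroup E] [NormedSpace 𝕜 E]
    {P : E →ₗ[𝕜] E} (hP : IsCompactOperator P) (hidem : IsIdempotentElem P) :
    FiniteDimensional 𝕜 (LinearMap.range P) := by
  have hclosed : IsClosed (LinearMap.range P : Set E) := by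
    convert isClosed_eq hP.continuous continuous_id
    ext u
    exact LinearMap.IsIdempotentElem.mem_range_iff hidem
  have hid : ⇑(P.restrict fun u _ => LinearMap.mem_range_self P u) = id :=
    funext fun ⟨_, hu⟩ => Subtype.ext ((LinearMap.IsIdempotentElem.mem_range_iff hidem).mp hu)
  exact .of_isCompactOperator_id (hid ▸ hP.restrict _ hclosed)

theorem notMem_topologicalClosure_sSup_of_isChain {𝕜 E : Type*} [NontriviallyNormedField 𝕜]
    [CompleteSpace 𝕜] [NormedAddCommGroup E] [NormedSpace 𝕜 E] (P : E →L[𝕜] E)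
    [FiniteDimensional 𝕜 (LinearMap.range (P : E →ₗ[𝕜] E))] {c : Set (Submodule 𝕜 E)}
    (hc : IsChain (· ≤ ·) c) (hne : c.Nonempty) (hclosed : ∀ e ∈ c, IsClosed (e : Set E))
    (hPc : ∀ e ∈ c, ∀ u ∈ e, P u ∈ e) {w : E} (hPw : P w = w) (hw : ∀ e ∈ c, w ∉ e) :
    w ∉ (sSup c).topologicalClosure := by
  have hdir := hc.directedOn
  have hfg : (sSup c ⊓ LinearMap.range (P : E →ₗ[𝕜] E)).FG :=
    Module.Finite.iff_fg.mp inferInstance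
  obtain ⟨e₀, he₀, hle⟩ :=
    (CompleteLattice.isCompactElement_iff_le_of_directed_sSup_le _ _).mp
      ((Submodule.fg_iff_compact _).mp hfg) c hne hdir inf_le_left
  have hmaps : Set.MapsTo P (sSup c : Submodule 𝕜 E) e₀ := fun u hu => by
    obtain ⟨e, he, hue⟩ := (Submodule.mem_sSup_of_directed hne hdir).mp hu
    exact hle ⟨le_sSup he (hPc e he u hue), LinearMap.mem_range_self (P : E →ₗ[𝕜] E) u⟩
  intro hwc
  have := map_mem_closure P.continuous hwc hmaps
  rw [(hclosed e₀ he₀).closure_eq, hPw] at this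
  exact hw e₀ he₀ this

theorem exists_covBy_of_sInf_mem {α : Type*} [CompleteLattice α] {L : Set α}
    (hL : ∀ s ⊆ L, sInf s ∈ L) {a b x : α} (ha : a ∈ L) (hb : b ∈ L) (hab : a ≤ b)
    (hxb : x ≤ b) (hxa : ¬x ≤ a)
    (hchain : ∀ c ⊆ L, IsChain (· ≤ ·) c → c.Nonempty → (∀ e ∈ c, ¬x ≤ e) →
      ∃ u ∈ L, ¬x ≤ u ∧ ∀ e ∈ c, e ≤ u) :
    ∃ c d : L, a ≤ c ∧ c ⋖ d ∧ (d : α) ≤ b := by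
  set d := sInf {e ∈ L | a ≤ e ∧ e ≤ b ∧ x ≤ e}
  have hdL : d ∈ L := hL _ fun e he => he.1
  have hxd : x ≤ d := le_sInf fun e he => he.2.2.2
  have hdmin : ∀ e ∈ L, a ≤ e → e ≤ b → x ≤ e → d ≤ e := fun e he hae heb hxe =>
    sInf_le ⟨he, hae, heb, hxe⟩
  have hdb : d ≤ b := hdmin b hb hab le_rfl hxb
  obtain ⟨c, hac, hc⟩ := zorn_le_nonempty₀ {e ∈ L | e ≤ d ∧ ¬x ≤ e}
    (fun s hs hs_chain y hy => by
      obtain ⟨u, huL, hxu, hsu⟩ := hchain s (fun e he => (hs he).1) hs_chain ⟨y, hy⟩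
        fun e he => (hs he).2.2
      refine ⟨u ⊓ d, ⟨?_, inf_le_right, fun h => hxu (h.trans inf_le_left)⟩,
        fun e he => le_inf (hsu e he) (hs he).2.1⟩
      simpa using hL {u, d} (Set.insert_subset huL (Set.singleton_subset_iff.mpr hdL)))
    a ⟨ha, le_sInf fun e he => he.2.1, hxa⟩
  refine ⟨⟨c, hc.prop.1⟩, ⟨d, hdL⟩, hac,
    ⟨?_, fun e (hce : c < e) (hed : (e : α) < d) => ?_⟩, hdb⟩
  · exact Subtype.coe_lt_coe.mp <| hc.prop.2.1.lt_of_ne fun h => hc.prop.2.2 (h ▸ hxd)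
  · by_cases hxe : x ≤ e
    · exact hed.not_ge (hdmin e e.2 (hac.trans hce.le) (hed.le.trans hdb) hxe)
    · exact hce.not_ge (hc.2 ⟨e.2, hed.le, hxe⟩ hce.le)

namespace IsClosedInvariantSubspace

variable {G H : Type*} [Group G] [NormedAddCommGroup H] [InnerProductSpace ℂ H]
  {ρ : G →* (H →L[ℂ] H)ˣ}

theorem bot : IsClosedInvariantSubspace ρ ⊥ :=
  ⟨by simp, fun g v hv => by simp [(Submodule.mem_bot ℂ).mp hv]⟩

theorem top : IsClosedInvariantSubspace ρ ⊤ :=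
  ⟨by simp, fun _ _ _ => trivial⟩

theorem sInf {s : Set (Submodule ℂ H)} (hs : ∀ U ∈ s, IsClosedInvariantSubspace ρ U) :
    IsClosedInvariantSubspace ρ (sInf s) := by
  refine ⟨?_, fun g v hv => Submodule.mem_sInf.mpr fun U hU => ?_⟩
  · rw [Submodule.coe_sInf]
    exact isClosed_biInter fun U hU => (hs U hU).1
  · exact (hs U hU).2 g v (Submodule.mem_sInf.mp hv U hU)

theorem topologicalClosure_sSup {s : Set (Submodule ℂ H)}
    (hs : ∀ U ∈ s, IsClosedInvariantSubspace ρ U) :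
    IsClosedInvariantSubspace ρ (sSup s).topologicalClosure := by
  have hinv (g : G) : sSup s ≤ (sSup s).comap ((ρ g : H →L[ℂ] H) : H →ₗ[ℂ] H) :=
    sSup_le fun U hU v hv => le_sSup hU ((hs U hU).2 g v hv)
  exact ⟨Submodule.isClosed_topologicalClosure _, fun g v hv =>
    map_mem_closure (ρ g : H →L[ℂ] H).continuous hv fun u hu => hinv g hu⟩

end IsClosedInvariantSubspace

theorem exists_irreducible_subquotient_of_finiteDimensional_range {G H : Type*} [Group G]
    [NormedAddCommGroup H] [InnerProductSpace ℂ H] {ρ : G →* (H →L[ℂ] H)ˣ}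
    {A B : Submodule ℂ H} (hA : IsClosedInvariantSubspace ρ A)
    (hB : IsClosedInvariantSubspace ρ B) (hAB : A ≤ B) (P : H →L[ℂ] H)
    [FiniteDimensional ℂ (LinearMap.range (P : H →ₗ[ℂ] H))]
    (hP : ∀ U, IsClosedInvariantSubspace ρ U → ∀ u ∈ U, P u ∈ U)
    {w : H} (hwB : w ∈ B) (hwA : w ∉ A) (hPw : P w = w) :
    ∃ C D : Submodule ℂ H, IsClosedInvariantSubspace ρ C ∧
      IsClosedInvariantSubspace ρ D ∧ A ≤ C ∧ C < D ∧ D ≤ B ∧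
      ¬∃ E : Submodule ℂ H, IsClosedInvariantSubspace ρ E ∧ C < E ∧ E < D := by
  obtain ⟨⟨C, hC⟩, ⟨D, hD⟩, hAC, hCD, hDB⟩ :=
    exists_covBy_of_sInf_mem (L := {U | IsClosedInvariantSubspace ρ U}) (x := ℂ ∙ w)
      (fun s hs => .sInf hs) hA hB hAB ((Submodule.span_singleton_le_iff_mem _ _).mpr hwB)
      (by rwa [Submodule.span_singleton_le_iff_mem])
      fun c hcL hc hne hwc =>
        ⟨_, .topologicalClosure_sSup hcL, by
          rw [Submodule.span_singleton_le_iff_mem]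
          refine notMem_topologicalClosure_sSup_of_isChain P hc hne (fun e he => (hcL he).1)
            (fun e he => hP e (hcL he)) hPw fun e he => ?_
          rw [← Submodule.span_singleton_le_iff_mem]
          exact hwc e he,
         fun e he => (le_sSup he).trans (Submodule.le_topologicalClosure _)⟩
  exact ⟨C, D, hC, hD, hAC, hCD.lt, hDB,
    fun ⟨E, hE, hCE, hED⟩ => hCD.2 (c := ⟨E, hE⟩) hCE hED⟩

open Metric Topology in
theorem exists_finiteDimensional_range_projection_apply_notMem
    {G : Type*} [Group G] [TopologicalSpace G] [IsTopologicalGroup G]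
    [LocallyCompactSpace G] [T2Space G] [TotallyDisconnectedSpace G]
    {H : Type*} [NormedAddCommGroup H] [InnerProductSpace ℂ H] [CompleteSpace H]
    (ρ : G →* (H →L[ℂ] H)ˣ)
    (hcont : Continuous fun p : G × H => (ρ p.1 : H →L[ℂ] H) p.2)
    (hcomp : ∀ K : Subgroup G, IsCompact (K : Set G) → IsOpen (K : Set G) →
      ∀ [MeasurableSpace ↥K] [BorelSpace ↥K] (μ : Measure ↥K),
        μ.IsHaarMeasure → IsProbabilityMeasure μ →
          IsCompactOperator (fun v : H => ∫ k : ↥K, (ρ (k : G) : H →L[ℂ] H) v ∂μ))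
    {A : Submodule ℂ H} (hA : IsClosed (A : Set H)) {v : H} (hv : v ∉ A) :
    ∃ P : H →L[ℂ] H, FiniteDimensional ℂ (LinearMap.range (P : H →ₗ[ℂ] H)) ∧
      IsIdempotentElem P ∧ (∀ U, IsClosedInvariantSubspace ρ U → ∀ u ∈ U, P u ∈ U) ∧
      P v ∉ A := by
  have hε : 0 < infDist v A := (hA.notMem_iff_infDist_pos ⟨0, A.zero_mem⟩).mp hv
  have hnhds : {g : G | ‖(ρ g : H →L[ℂ] H) v - v‖ < infDist v A / 2} ∈ 𝓝 1 := by
    refine (isOpen_lt ?_ continuous_const).mem_nhds (by simpa using half_pos hε)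
    exact continuous_norm.comp
      ((hcont.comp (continuous_id.prodMk continuous_const)).sub continuous_const)
  obtain ⟨K, hKc, hKo, hKv⟩ := exists_compact_open_subgroup_subset hnhds
  have : CompactSpace K := isCompact_iff_compactSpace.mp hKc
  let _ : MeasurableSpace K := borel K
  have : BorelSpace K := ⟨rfl⟩
  let μ : Measure K := Measure.haarMeasure ⊤
  have : IsProbabilityMeasure μ := ⟨Measure.haarMeasure_self⟩
  let π : K →* (H →L[ℂ] H) := (Units.coeHom _).comp (ρ.comp K.subtype)
  have hπ : ∀ u, Continuous fun k => π k u := fun u =>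
    hcont.comp (continuous_subtype_val.prodMk continuous_const)
  have hP : IsCompactOperator (orbitAverage μ π hπ) :=
    hcomp K hKc hKo μ inferInstance inferInstance
  have hidem : IsIdempotentElem (orbitAverage μ π hπ) := isIdempotentElem_orbitAverage
  refine ⟨.mkOfIsCompactOperator hP, hP.finiteDimensional_range_of_isIdempotentElem hidem,
    ContinuousLinearMap.coe_injective hidem,
    fun U hU u hu => orbitAverage_mem (μ := μ) (hπ := hπ) hU.1 (fun k => hU.2 k) hu,
    fun hPv => ?_⟩
  have hfar : infDist v A ≤ ‖orbitAverage μ π hπ v - v‖ := by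
    simpa [dist_eq_norm'] using infDist_le_dist_of_mem hPv
  have hnear : ‖orbitAverage μ π hπ v - v‖ ≤ infDist v A / 2 :=
    norm_orbitAverage_sub_le fun k => (hKv k.2).le
  linarith

theorem exists_irreducible_subquotient_between
    {G : Type*} [Group G] [TopologicalSpace G] [IsTopologicalGroup G]
    [LocallyCompactSpace G] [T2Space G] [TotallyDisconnectedSpace G]
    {H : Type*} [NormedAddCommGroup H] [InnerProductSpace ℂ H] [CompleteSpace H]
    (ρ : G →* (H →L[ℂ] H)ˣ)
    (hcont : Continuous fun p : G × H => (ρ p.1 : H →L[ℂ] H) p.2)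
    (hcomp : ∀ K : Subgroup G, IsCompact (K : Set G) → IsOpen (K : Set G) →
      ∀ [MeasurableSpace ↥K] [BorelSpace ↥K] (μ : Measure ↥K),
        μ.IsHaarMeasure → IsProbabilityMeasure μ →
          IsCompactOperator (fun v : H => ∫ k : ↥K, (ρ (k : G) : H →L[ℂ] H) v ∂μ))
    {A B : Submodule ℂ H} (hA : IsClosedInvariantSubspace ρ A)
    (hB : IsClosedInvariantSubspace ρ B) (hAB : A < B) :
    ∃ C D : Submodule ℂ H, IsClosedInvariantSubspace ρ C ∧
      IsClosedInvariantSubspace ρ D ∧ A ≤ C ∧ C < D ∧ D ≤ B ∧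
      ¬∃ E : Submodule ℂ H, IsClosedInvariantSubspace ρ E ∧ C < E ∧ E < D := by
  obtain ⟨v, hvB, hvA⟩ := SetLike.exists_of_lt hAB
  obtain ⟨P, _, hidem, hP, hPv⟩ :=
    exists_finiteDimensional_range_projection_apply_notMem ρ hcont hcomp hA.1 hvA
  exact exists_irreducible_subquotient_of_finiteDimensional_range hA hB hAB.le P hP
    (hP B hB v hvB) hPv (congr($hidem v))

/-- A compact Hilbert representation of a locally compact, Hausdorff,
totally disconnected group has, between any two nested closed invariant subspaces,
a pair of closed invariant subspaces with nothing strictly in between (an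
irreducible subquotient); in particular if `H ≠ 0` it has an irreducible
subquotient. -/
theorem compact_rep_td_has_irreducible_subquotient
    {G : Type*} [Group G] [TopologicalSpace G] [IsTopologicalGroup G]
    [LocallyCompactSpace G] [T2Space G] [TotallyDisconnectedSpace G]
    {H : Type*} [NormedAddCommGroup H] [InnerProductSpace ℂ H] [CompleteSpace H]
    (ρ : G →* (H →L[ℂ] H)ˣ)
    (hcont : Continuous fun p : G × H => (ρ p.1 : H →L[ℂ] H) p.2)
    (hcomp : ∀ K : Subgroup G, IsCompact (K : Set G) → IsOpen (K : Set G) →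
      ∀ [MeasurableSpace ↥K] [BorelSpace ↥K] (μ : Measure ↥K),
        μ.IsHaarMeasure → IsProbabilityMeasure μ →
          IsCompactOperator (fun v : H => ∫ k : ↥K, (ρ (k : G) : H →L[ℂ] H) v ∂μ)) :
    (∀ A B : Submodule ℂ H, IsClosedInvariantSubspace ρ A →
      IsClosedInvariantSubspace ρ B → A < B →
      ∃ C D : Submodule ℂ H, IsClosedInvariantSubspace ρ C ∧
        IsClosedInvariantSubspace ρ D ∧ A ≤ C ∧ C < D ∧ D ≤ B ∧
        ¬∃ E : Submodule ℂ H, IsClosedInvariantSubspace ρ E ∧ C < E ∧ E < D) ∧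
    ((∃ v : H, v ≠ 0) →
      ∃ C D : Submodule ℂ H, IsClosedInvariantSubspace ρ C ∧
        IsClosedInvariantSubspace ρ D ∧ C < D ∧
        ¬∃ E : Submodule ℂ H, IsClosedInvariantSubspace ρ E ∧ C < E ∧ E < D) := by
  refine ⟨fun A B => exists_irreducible_subquotient_between ρ hcont hcomp,
    fun ⟨v, hv⟩ => ?_⟩
  have : Nontrivial H := nontrivial_of_ne v 0 hv
  obtain ⟨C, D, hC, hD, -, hCD, -, hirr⟩ :=
    exists_irreducible_subquotient_between ρ hcont hcomp .bot .top bot_lt_top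
  exact ⟨C, D, hC, hD, hCD, hirr⟩
end
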